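/- arXiv:1006.0293 — 2 statements merged into one kernel-verified Lean document; each statement's English description precedes it below -/
import Mathlib

section
/- For all integers k ≥ 2, n ≥ 1, p ≥ 0, r ≥ 0, the group G(k,n,p,r) is isomorphic to (ℤ/pℤ) × (ℤ/rℤ); moreover there is such an isomorphism sending the image of c₂ to (1,0), the image of d₂ to (0,1), and the images of all other generators to the identity. (Algebraic core of Lemma 3.3: π₁ of the surgered manifold is ℤ/p ⊕ ℤ/r.) -/
/-- Generators of the presentation: `a1, b1, a2, b2`, the tilde generators
`ct = c̃`, `dt = d̃`, and `c i`, `d i` for `i : Fin k`, where `c i` denotes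
`c_{i+1}` (so `c ⟨0,_⟩ = c₁`, `c ⟨1,_⟩ = c₂`, …). -/
inductive Gen (k : ℕ) : Type
  | a1 | b1 | a2 | b2 | ct | dt
  | c : Fin k → Gen k
  | d : Fin k → Gen k

namespace Gen

variable (k : ℕ)

def A1 : FreeGroup (Gen k) := FreeGroup.of Gen.a1
def B1 : FreeGroup (Gen k) := FreeGroup.of Gen.b1
def A2 : FreeGroup (Gen k) := FreeGroup.of Gen.a2
def B2 : FreeGroup (Gen k) := FreeGroup.of Gen.b2
def Ct : FreeGroup (Gen k) := FreeGroup.of Gen.ct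
def Dt : FreeGroup (Gen k) := FreeGroup.of Gen.dt
def C (i : Fin k) : FreeGroup (Gen k) := FreeGroup.of (Gen.c i)
def D (i : Fin k) : FreeGroup (Gen k) := FreeGroup.of (Gen.d i)

end Gen

open scoped commutatorElement

open Gen in
/-- The relators of the presentation of `π₁(M)` from Lemma 3.2 (a relation
`w = v` is encoded as the relator `w * v⁻¹`). -/
def rels (k n p r : ℕ) : Set (FreeGroup (Gen k)) :=
  { x |
    -- a₂ = c̃⁻¹ a₁ c̃
    x = A2 k * ((Ct k)⁻¹ * A1 k * Ct k)⁻¹ ∨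
    -- b₂ = c̃⁻¹ b₁ c̃
    x = B2 k * ((Ct k)⁻¹ * B1 k * Ct k)⁻¹ ∨
    -- b₁ = c̃⁻¹ b₂ c̃
    x = B1 k * ((Ct k)⁻¹ * B2 k * Ct k)⁻¹ ∨
    -- [b₂, d̃] = 1
    x = ⁅B2 k, Dt k⁆ ∨
    -- [a₁⁻¹ b₁⁻¹ a₂, d̃] = 1
    x = ⁅(A1 k)⁻¹ * (B1 k)⁻¹ * A2 k, Dt k⁆ ∨
    -- [a₂⁻¹ b₂⁻¹ a₁, d̃] = 1
    x = ⁅(A2 k)⁻¹ * (B2 k)⁻¹ * A1 k, Dt k⁆ ∨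
    -- c̃⁻¹ a₁ a₂ c̃ a₁⁻¹ a₂⁻¹ = d̃
    x = (Ct k)⁻¹ * A1 k * A2 k * Ct k * (A1 k)⁻¹ * (A2 k)⁻¹ * (Dt k)⁻¹ ∨
    -- [a₁, d̃⁻¹] = c̃
    x = ⁅A1 k, (Dt k)⁻¹⁆ * (Ct k)⁻¹ ∨
    -- [b₁, d̃] = 1
    x = ⁅B1 k, Dt k⁆ ∨
    -- [a₁, b₁][a₂, b₂] = 1
    x = ⁅A1 k, B1 k⁆ * ⁅A2 k, B2 k⁆ ∨
    -- [c₁,d₁][c₂,d₂]⋯[c_k,d_k][c̃,d̃] = 1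
    x = (List.ofFn fun i : Fin k => ⁅C k i, D k i⁆).prod * ⁅Ct k, Dt k⁆ ∨
    -- relations involving c₁, d₁  (index 0)
    (∃ i : Fin k, (i : ℕ) = 0 ∧
      (x = ⁅(B1 k)⁻¹, (D k i)⁻¹⁆ * (A1 k)⁻¹ ∨      -- [b₁⁻¹,d₁⁻¹] = a₁
       x = ⁅(A1 k)⁻¹, D k i⁆ * (B1 k)⁻¹ ∨           -- [a₁⁻¹,d₁] = b₁
       x = ⁅(B2 k)⁻¹, (D k i)⁻¹⁆ * (C k i)⁻¹ ∨      -- [b₂⁻¹,d₁⁻¹] = c₁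
       x = ⁅B2 k, (C k i)⁻¹⁆ ^ n * (D k i)⁻¹ ∨      -- [b₂,c₁⁻¹]ⁿ = d₁
       x = ⁅A1 k, C k i⁆ ∨ x = ⁅B1 k, C k i⁆ ∨      -- [a₁,c₁] = [b₁,c₁] = 1
       x = ⁅A2 k, C k i⁆ ∨ x = ⁅A2 k, D k i⁆)) ∨    -- [a₂,c₁] = [a₂,d₁] = 1
    -- relations involving c₂, d₂  (index 1)
    (∃ i : Fin k, (i : ℕ) = 1 ∧
      (x = ⁅(B2 k)⁻¹, (D k i)⁻¹⁆ * ((C k i) ^ p)⁻¹ ∨  -- [b₂⁻¹,d₂⁻¹] = c₂ᵖ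
       x = ⁅B2 k, (C k i)⁻¹⁆ * ((D k i) ^ r)⁻¹)) ∨    -- [b₂,c₂⁻¹] = d₂ʳ
    -- relations [b₂⁻¹,d_i⁻¹] = c_i, [b₂,c_i⁻¹] = d_i for 3 ≤ i ≤ k
    (∃ i : Fin k, 2 ≤ (i : ℕ) ∧
      (x = ⁅(B2 k)⁻¹, (D k i)⁻¹⁆ * (C k i)⁻¹ ∨
       x = ⁅B2 k, (C k i)⁻¹⁆ * (D k i)⁻¹)) ∨
    -- commuting relations for 2 ≤ i ≤ k
    (∃ i : Fin k, 1 ≤ (i : ℕ) ∧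
      (x = ⁅A2 k, C k i⁆ ∨ x = ⁅A2 k, D k i⁆ ∨
       x = ⁅A1 k, C k i⁆ ∨ x = ⁅B1 k, D k i⁆ ∨
       x = ⁅A1 k, D k i⁆ ∨ x = ⁅B1 k, C k i⁆)) }

/-- The group `G(k,n,p,r)` of Lemma 3.2/3.3: the fundamental group of the
surgered manifold, given by the above presentation. -/
abbrev G (k n p r : ℕ) : Type := PresentedGroup (rels k n p r)

/-- The image in `G k n p r` of a generator. -/
abbrev gen (k n p r : ℕ) (g : Gen k) : G k n p r := PresentedGroup.of g


/-!
Conjugation by `d̃` fixes `b₁`, `b₂`, `a₁⁻¹b₁⁻¹a₂` and `a₂⁻¹b₂⁻¹a₁`, and sends `a₁` to `c̃⁻¹a₁`.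
Computing its effect on `a₂⁻¹b₂⁻¹a₁` in two ways shows that `c̃` centralizes `b₂b₁`; since `c̃`
also swaps `b₁` and `b₂` by conjugation, `b₁` and `b₂` commute. Hence `b₁` commutes with
`d₁ = [b₂,c₁⁻¹]ⁿ`, so `a₁ = [b₁⁻¹,d₁⁻¹] = 1` and `b₁ = [a₁⁻¹,d₁] = 1`; the remaining relations
then kill `c̃, a₂, b₂, d̃` and all `cᵢ, dᵢ` with `i ≠ 2`, and leave `c₂, d₂` commuting with
`c₂ᵖ = d₂ʳ = 1`. Conversely, sending `c₂ ↦ (1,0)`, `d₂ ↦ (0,1)` respects every relation because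
the target is abelian, and the two maps are mutually inverse.
-/

theorem List.prod_ofFn_eq_single {M : Type*} [Monoid M] {m : ℕ} {f : Fin m → M} (j : Fin m)
    (hf : ∀ i ≠ j, f i = 1) : (List.ofFn f).prod = f j := by
  rw [List.ofFn_eq_map, List.prod_map_eq_pow_single j f fun i hi _ => hf i hi,
    List.count_finRange, pow_one]

theorem PresentedGroup.commute_mk_of_commutatorElement_mem {α : Type*}
    {rels : Set (FreeGroup α)} (u v : FreeGroup α) (h : ⁅u, v⁆ ∈ rels) :
    Commute (PresentedGroup.mk rels u) (PresentedGroup.mk rels v) :=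
  commutatorElement_eq_one_iff_commute.mp <|
    map_commutatorElement (PresentedGroup.mk rels) u v ▸ PresentedGroup.one_of_mem h

section GroupLemmas

variable {H : Type*} [Group H]

theorem commute_of_conj_swap {c x y : H} (hy : y = c⁻¹ * x * c) (hx : x = c⁻¹ * y * c)
    (hc : Commute c (y * x)) : Commute x y :=
  calc x * y = (c⁻¹ * y * c) * (c⁻¹ * x * c) := by rw [← hx, ← hy]
    _ = c⁻¹ * (y * x) * c := by group
    _ = y * x := by rw [mul_assoc, ← hc.eq, inv_mul_cancel_left]

theorem commute_mul_of_conj_relations {a₁ b₁ a₂ b₂ c d : H} (hb₁ : Commute b₁ d)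
    (hb₂ : Commute b₂ d) (hw : Commute (a₁⁻¹ * b₁⁻¹ * a₂) d) (hv : Commute (a₂⁻¹ * b₂⁻¹ * a₁) d)
    (hc : ⁅a₁, d⁻¹⁆ = c) : Commute c (b₂ * b₁) := by
  set σ := MulAut.conj d⁻¹
  have fix : ∀ {x : H}, Commute x d → σ x = x := fun h => by
    rw [MulAut.conj_apply, inv_inv, mul_assoc, h.eq, inv_mul_cancel_left]
  have ha₁ : σ a₁ = c⁻¹ * a₁ := by
    rw [← hc, MulAut.conj_apply, commutatorElement_def]; group
  have ha₂ : σ a₂ = b₁ * c⁻¹ * b₁⁻¹ * a₂ :=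
    calc σ a₂ = σ b₁ * σ a₁ * σ (a₁⁻¹ * b₁⁻¹ * a₂) := by rw [← map_mul, ← map_mul]; group
      _ = b₁ * c⁻¹ * b₁⁻¹ * a₂ := by rw [fix hb₁, ha₁, fix hw]; group
  have key := fix hv
  rw [map_mul, map_mul, map_inv, map_inv, ha₂, fix hb₂, ha₁] at key
  calc c * (b₂ * b₁)
      = (b₁⁻¹ * (a₂ * ((b₁ * c⁻¹ * b₁⁻¹ * a₂)⁻¹ * b₂⁻¹ * (c⁻¹ * a₁)) * a₁⁻¹))⁻¹ * c := by group
    _ = (b₁⁻¹ * (a₂ * (a₂⁻¹ * b₂⁻¹ * a₁) * a₁⁻¹))⁻¹ * c := by rw [key]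
    _ = b₂ * b₁ * c := by group

theorem Commute.commutatorElement_right {a x y : H} (hx : Commute a x) (hy : Commute a y) :
    Commute a ⁅x, y⁆ := by
  rw [commutatorElement_def]
  exact ((hx.mul_right hy).mul_right hx.inv_right).mul_right hy.inv_right

end GroupLemmas

section Relations

open Gen PresentedGroup

variable {k n p r : ℕ}

local notation "ι" => gen k n p r

theorem commute_gen_b1_b2 : Commute (ι .b1) (ι .b2) :=
  commute_of_conj_swap (c := ι .ct)
    (mk_eq_mk_of_mul_inv_mem (x := B2 k) (y := (Ct k)⁻¹ * B1 k * Ct k) (by simp [rels]))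
    (mk_eq_mk_of_mul_inv_mem (x := B1 k) (y := (Ct k)⁻¹ * B2 k * Ct k) (by simp [rels]))
    (commute_mul_of_conj_relations (a₁ := ι .a1) (a₂ := ι .a2)
      (commute_mk_of_commutatorElement_mem (B1 k) (Dt k) (by simp [rels]))
      (commute_mk_of_commutatorElement_mem (B2 k) (Dt k) (by simp [rels]))
      (commute_mk_of_commutatorElement_mem ((A1 k)⁻¹ * (B1 k)⁻¹ * A2 k) (Dt k) (by simp [rels]))
      (commute_mk_of_commutatorElement_mem ((A2 k)⁻¹ * (B2 k)⁻¹ * A1 k) (Dt k) (by simp [rels]))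
      (mk_eq_mk_of_mul_inv_mem (x := ⁅A1 k, (Dt k)⁻¹⁆) (y := Ct k) (by simp [rels])))

theorem gen_a1_eq_one_and_gen_b1_eq_one (hk : 0 < k) : ι .a1 = 1 ∧ ι .b1 = 1 := by
  let i : Fin k := ⟨0, hk⟩
  have hc : Commute (ι .b1) (ι (.c i)) :=
    commute_mk_of_commutatorElement_mem (B1 k) (C k i) (by simp [rels]; grind)
  have hd : ⁅ι .b2, (ι (.c i))⁻¹⁆ ^ n = ι (.d i) :=
    mk_eq_mk_of_mul_inv_mem (x := ⁅B2 k, (C k i)⁻¹⁆ ^ n) (y := D k i) (by simp [rels]; grind)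
  have ha : ⁅(ι .b1)⁻¹, (ι (.d i))⁻¹⁆ = ι .a1 :=
    mk_eq_mk_of_mul_inv_mem (x := ⁅(B1 k)⁻¹, (D k i)⁻¹⁆) (y := A1 k) (by simp [rels]; grind)
  have hb : ⁅(ι .a1)⁻¹, ι (.d i)⁆ = ι .b1 :=
    mk_eq_mk_of_mul_inv_mem (x := ⁅(A1 k)⁻¹, D k i⁆) (y := B1 k) (by simp [rels]; grind)
  have hbd : Commute (ι .b1) (ι (.d i)) :=
    hd ▸ (Commute.commutatorElement_right commute_gen_b1_b2 hc.inv_right).pow_right n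
  have ha₁ : ι .a1 = 1 := by rw [← ha, commutatorElement_eq_one_iff_commute]; exact hbd.inv_inv
  exact ⟨ha₁, by rw [← hb, ha₁, inv_one, commutatorElement_one_left]⟩

theorem gen_ct_eq_one (hk : 0 < k) : ι .ct = 1 := by
  have h : ⁅ι .a1, (ι .dt)⁻¹⁆ = ι .ct :=
    mk_eq_mk_of_mul_inv_mem (x := ⁅A1 k, (Dt k)⁻¹⁆) (y := Ct k) (by simp [rels])
  rw [← h, (gen_a1_eq_one_and_gen_b1_eq_one hk).1, commutatorElement_one_left]

theorem gen_a2_eq_one (hk : 0 < k) : ι .a2 = 1 := by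
  have h : ι .a2 = (ι .ct)⁻¹ * ι .a1 * ι .ct :=
    mk_eq_mk_of_mul_inv_mem (x := A2 k) (y := (Ct k)⁻¹ * A1 k * Ct k) (by simp [rels])
  rw [h, gen_ct_eq_one hk, (gen_a1_eq_one_and_gen_b1_eq_one hk).1]
  group

theorem gen_b2_eq_one (hk : 0 < k) : ι .b2 = 1 := by
  have h : ι .b2 = (ι .ct)⁻¹ * ι .b1 * ι .ct :=
    mk_eq_mk_of_mul_inv_mem (x := B2 k) (y := (Ct k)⁻¹ * B1 k * Ct k) (by simp [rels])
  rw [h, gen_ct_eq_one hk, (gen_a1_eq_one_and_gen_b1_eq_one hk).2]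
  group

theorem gen_dt_eq_one (hk : 0 < k) : ι .dt = 1 := by
  have h : (ι .ct)⁻¹ * ι .a1 * ι .a2 * ι .ct * (ι .a1)⁻¹ * (ι .a2)⁻¹ = ι .dt :=
    mk_eq_mk_of_mul_inv_mem (x := (Ct k)⁻¹ * A1 k * A2 k * Ct k * (A1 k)⁻¹ * (A2 k)⁻¹)
      (y := Dt k) (by simp [rels])
  rw [← h, gen_ct_eq_one hk, (gen_a1_eq_one_and_gen_b1_eq_one hk).1, gen_a2_eq_one hk]
  group

theorem gen_c_eq_one_and_gen_d_eq_one (i : Fin k) (hi : (i : ℕ) ≠ 1) :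
    ι (.c i) = 1 ∧ ι (.d i) = 1 := by
  have hb₂ : ι .b2 = 1 := gen_b2_eq_one i.pos
  have hc : ⁅(ι .b2)⁻¹, (ι (.d i))⁻¹⁆ = ι (.c i) := by
    refine mk_eq_mk_of_mul_inv_mem (x := ⁅(B2 k)⁻¹, (D k i)⁻¹⁆) (y := C k i) ?_
    simp [rels]; grind
  refine ⟨by rw [← hc, hb₂, inv_one, commutatorElement_one_left], ?_⟩
  rcases Nat.lt_or_gt_of_ne hi with hi | hi
  · have hd : ⁅ι .b2, (ι (.c i))⁻¹⁆ ^ n = ι (.d i) :=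
      mk_eq_mk_of_mul_inv_mem (x := ⁅B2 k, (C k i)⁻¹⁆ ^ n) (y := D k i) (by simp [rels]; grind)
    rw [← hd, hb₂, commutatorElement_one_left, one_pow]
  · have hd : ⁅ι .b2, (ι (.c i))⁻¹⁆ = ι (.d i) :=
      mk_eq_mk_of_mul_inv_mem (x := ⁅B2 k, (C k i)⁻¹⁆) (y := D k i) (by simp [rels]; grind)
    rw [← hd, hb₂, commutatorElement_one_left]

theorem gen_c_pow_eq_one (i : Fin k) (hi : (i : ℕ) = 1) : ι (.c i) ^ p = 1 := by
  have h : ⁅(ι .b2)⁻¹, (ι (.d i))⁻¹⁆ = ι (.c i) ^ p :=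
    mk_eq_mk_of_mul_inv_mem (x := ⁅(B2 k)⁻¹, (D k i)⁻¹⁆) (y := C k i ^ p) (by simp [rels]; grind)
  rw [← h, gen_b2_eq_one i.pos, inv_one, commutatorElement_one_left]

theorem gen_d_pow_eq_one (i : Fin k) (hi : (i : ℕ) = 1) : ι (.d i) ^ r = 1 := by
  have h : ⁅ι .b2, (ι (.c i))⁻¹⁆ = ι (.d i) ^ r :=
    mk_eq_mk_of_mul_inv_mem (x := ⁅B2 k, (C k i)⁻¹⁆) (y := D k i ^ r) (by simp [rels]; grind)
  rw [← h, gen_b2_eq_one i.pos, commutatorElement_one_left]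

theorem commute_gen_c_gen_d (i : Fin k) (hi : (i : ℕ) = 1) : Commute (ι (.c i)) (ι (.d i)) := by
  have h := one_of_mem (rels := rels k n p r)
    (x := (List.ofFn fun j => ⁅C k j, D k j⁆).prod * ⁅Ct k, Dt k⁆) (by simp [rels])
  rw [map_mul, map_list_prod, List.map_ofFn, List.prod_ofFn_eq_single i fun j hj => ?_] at h
  · change ⁅ι (.c i), ι (.d i)⁆ * ⁅ι .ct, ι .dt⁆ = 1 at h
    rw [gen_ct_eq_one i.pos, commutatorElement_one_left, mul_one] at h
    exact commutatorElement_eq_one_iff_commute.mp h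
  · change ⁅ι (.c j), ι (.d j)⁆ = 1
    rw [(gen_c_eq_one_and_gen_d_eq_one j fun hj' => hj (Fin.ext (hj'.trans hi.symm))).1,
      commutatorElement_one_left]

end Relations

section ZModLift

variable {H : Type*} [Group H] {m : ℕ} {x : H}

def zmodPowHom (hx : x ^ m = 1) : Multiplicative (ZMod m) →* H :=
  AddMonoidHom.toMultiplicativeLeft <|
    ZMod.lift m ⟨zmultiplesHom (Additive H) (Additive.ofMul x), by simp [← ofMul_pow, hx]⟩

theorem zmodPowHom_ofAdd_intCast (hx : x ^ m = 1) (z : ℤ) :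
    zmodPowHom hx (Multiplicative.ofAdd (z : ZMod m)) = x ^ z := by
  simp [zmodPowHom, ZMod.lift_coe]

theorem commute_zmodPowHom {q : ℕ} {y : H} (hx : x ^ m = 1) (hy : y ^ q = 1) (hxy : Commute x y)
    (a : Multiplicative (ZMod m)) (b : Multiplicative (ZMod q)) :
    Commute (zmodPowHom hx a) (zmodPowHom hy b) := by
  obtain ⟨z, hz⟩ := ZMod.intCast_surjective a.toAdd
  obtain ⟨w, hw⟩ := ZMod.intCast_surjective b.toAdd
  rw [← ofAdd_toAdd a, ← ofAdd_toAdd b, ← hz, ← hw, zmodPowHom_ofAdd_intCast,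
    zmodPowHom_ofAdd_intCast]
  exact hxy.zpow_zpow z w

def zmodProdLift {q : ℕ} {y : H} (hx : x ^ m = 1) (hy : y ^ q = 1) (hxy : Commute x y) :
    Multiplicative (ZMod m × ZMod q) →* H :=
  (MonoidHom.noncommCoprod _ _ (commute_zmodPowHom hx hy hxy)).comp
    (MulEquiv.prodMultiplicative _ _).toMonoidHom

theorem zmodProdLift_ofAdd_intCast {q : ℕ} {y : H} (hx : x ^ m = 1) (hy : y ^ q = 1)
    (hxy : Commute x y) (z w : ℤ) :
    zmodProdLift hx hy hxy (Multiplicative.ofAdd ((z : ZMod m), (w : ZMod q))) = x ^ z * y ^ w := by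
  simp [zmodProdLift, MonoidHom.noncommCoprod_apply, zmodPowHom_ofAdd_intCast]

end ZModLift

namespace Gen

def toZModProd {k : ℕ} (p r : ℕ) : Gen k → Multiplicative (ZMod p × ZMod r)
  | .c i => if (i : ℕ) = 1 then .ofAdd (1, 0) else 1
  | .d i => if (i : ℕ) = 1 then .ofAdd (0, 1) else 1
  | _ => 1

variable {k n p r : ℕ}

theorem lift_toZModProd_eq_one (x : FreeGroup (Gen k)) (hx : x ∈ rels k n p r) :
    FreeGroup.lift (toZModProd p r) x = 1 := by
  have hc (a b : Multiplicative (ZMod p × ZMod r)) : ⁅a, b⁆ = 1 := (Commute.all a b).commutator_eq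
  simp only [rels, Set.mem_ofPred_eq] at hx
  rcases hx with rfl | rfl | rfl | rfl | rfl | rfl | rfl | rfl | rfl | rfl | rfl |
    ⟨i, hi, rfl | rfl | rfl | rfl | rfl | rfl | rfl | rfl⟩ | ⟨i, hi, rfl | rfl⟩ |
    ⟨i, hi, rfl | rfl⟩ | ⟨i, hi, rfl | rfl | rfl | rfl | rfl | rfl⟩
  all_goals simp [A1, A2, B1, B2, Ct, Dt, C, D, toZModProd, map_commutatorElement, hc,
    map_list_prod, List.map_ofFn, Function.comp_def, ← ofAdd_nsmul]
  all_goals omega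

end Gen

section Iso

open Gen

variable {k n p r : ℕ}

def toZModProdHom : G k n p r →* Multiplicative (ZMod p × ZMod r) :=
  PresentedGroup.toGroup lift_toZModProd_eq_one

theorem toZModProdHom_gen (g : Gen k) :
    toZModProdHom (gen k n p r g) = toZModProd p r g :=
  PresentedGroup.toGroup.of _

def ofZModProdHom (hk : 2 ≤ k) : Multiplicative (ZMod p × ZMod r) →* G k n p r :=
  zmodProdLift (gen_c_pow_eq_one ⟨1, hk⟩ rfl) (gen_d_pow_eq_one ⟨1, hk⟩ rfl)
    (commute_gen_c_gen_d ⟨1, hk⟩ rfl)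

theorem ofZModProdHom_ofAdd_intCast (hk : 2 ≤ k) (z w : ℤ) :
    ofZModProdHom hk (.ofAdd ((z : ZMod p), (w : ZMod r))) =
      gen k n p r (.c ⟨1, hk⟩) ^ z * gen k n p r (.d ⟨1, hk⟩) ^ w :=
  zmodProdLift_ofAdd_intCast _ _ _ z w

theorem ofZModProdHom_toZModProd (hk : 2 ≤ k) (g : Gen k) :
    ofZModProdHom hk (toZModProd p r g) = gen k n p r g := by
  have hc := ofZModProdHom_ofAdd_intCast (n := n) (p := p) (r := r) hk 1 0
  have hd := ofZModProdHom_ofAdd_intCast (n := n) (p := p) (r := r) hk 0 1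
  simp only [Int.cast_one, Int.cast_zero, zpow_one, zpow_zero, mul_one, one_mul] at hc hd
  have hk₀ : 0 < k := by omega
  cases g with
  | a1 => exact (map_one _).trans (gen_a1_eq_one_and_gen_b1_eq_one hk₀).1.symm
  | b1 => exact (map_one _).trans (gen_a1_eq_one_and_gen_b1_eq_one hk₀).2.symm
  | a2 => exact (map_one _).trans (gen_a2_eq_one hk₀).symm
  | b2 => exact (map_one _).trans (gen_b2_eq_one hk₀).symm
  | ct => exact (map_one _).trans (gen_ct_eq_one hk₀).symm
  | dt => exact (map_one _).trans (gen_dt_eq_one hk₀).symm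
  | c i =>
    by_cases hi : (i : ℕ) = 1
    · obtain rfl : i = ⟨1, hk⟩ := Fin.ext hi
      simpa [toZModProd] using hc
    · simpa [toZModProd, hi] using (gen_c_eq_one_and_gen_d_eq_one i hi).1.symm
  | d i =>
    by_cases hi : (i : ℕ) = 1
    · obtain rfl : i = ⟨1, hk⟩ := Fin.ext hi
      simpa [toZModProd] using hd
    · simpa [toZModProd, hi] using (gen_c_eq_one_and_gen_d_eq_one i hi).2.symm

theorem toZModProdHom_ofZModProdHom (hk : 2 ≤ k) (x : Multiplicative (ZMod p × ZMod r)) :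
    toZModProdHom (ofZModProdHom (n := n) hk x) = x := by
  obtain ⟨z, hz⟩ := ZMod.intCast_surjective x.toAdd.1
  obtain ⟨w, hw⟩ := ZMod.intCast_surjective x.toAdd.2
  obtain rfl : x = .ofAdd ((z : ZMod p), (w : ZMod r)) := by rw [hz, hw]; rfl
  simp only [ofZModProdHom_ofAdd_intCast, map_mul, map_zpow, toZModProdHom_gen, toZModProd]
  simp [← ofAdd_zsmul, ← ofAdd_add]

def equivZModProd (hk : 2 ≤ k) : G k n p r ≃* Multiplicative (ZMod p × ZMod r) :=
  MonoidHom.toMulEquiv toZModProdHom (ofZModProdHom hk)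
    (PresentedGroup.ext fun g => by simp [toZModProdHom_gen, ofZModProdHom_toZModProd])
    (MonoidHom.ext (toZModProdHom_ofZModProdHom (n := n) hk))

theorem equivZModProd_gen (hk : 2 ≤ k) (g : Gen k) :
    equivZModProd (n := n) (p := p) (r := r) hk (gen k n p r g) = toZModProd p r g :=
  toZModProdHom_gen (n := n) g

end Iso

/-- algebraic core of Lemma 3.3: for `k ≥ 2`, `n ≥ 1`,
`p, r ≥ 0`, the group `G(k,n,p,r)` is isomorphic to `ℤ/p × ℤ/r`, via an
isomorphism sending `c₂ ↦ (1,0)`, `d₂ ↦ (0,1)`, and all other generators to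
the identity. -/
theorem G_iso_zmod_prod (k n p r : ℕ) (hk : 2 ≤ k) :
    ∃ e : G k n p r ≃* Multiplicative (ZMod p × ZMod r),
      e (gen k n p r (Gen.c ⟨1, by omega⟩)) = Multiplicative.ofAdd (1, 0) ∧
      e (gen k n p r (Gen.d ⟨1, by omega⟩)) = Multiplicative.ofAdd (0, 1) ∧
      e (gen k n p r Gen.a1) = 1 ∧ e (gen k n p r Gen.b1) = 1 ∧
      e (gen k n p r Gen.a2) = 1 ∧ e (gen k n p r Gen.b2) = 1 ∧
      e (gen k n p r Gen.ct) = 1 ∧ e (gen k n p r Gen.dt) = 1 ∧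
      ∀ i : Fin k, (i : ℕ) ≠ 1 →
        e (gen k n p r (Gen.c i)) = 1 ∧ e (gen k n p r (Gen.d i)) = 1 := by
  refine ⟨equivZModProd hk, ?_⟩
  simp +contextual [equivZModProd_gen, Gen.toZModProd]
end

section
/- For all integers k ≥ 2, n ≥ 1, p ≥ 0, r ≥ 0, the image of the generator a₁ is the identity element of G(k,n,p,r). (Key step in the proof of Lemma 3.3.) -/
open scoped commutatorElement

/-! `b₁` commutes with `b₂` and with `c₁`, hence with `d₁ = [b₂, c₁⁻¹]ⁿ`, so that
`a₁ = [b₁⁻¹, d₁⁻¹] = 1`.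

That `b₁` and `b₂` commute is seen by computing `d̃⁻¹ a₂ d̃` in two ways, from
`a₂ = b₁ a₁ (a₁⁻¹ b₁⁻¹ a₂)` and from `a₂ = b₂⁻¹ a₁ (a₂⁻¹ b₂⁻¹ a₁)⁻¹`: conjugation by `d̃` fixes
`b₁`, `b₂` and the two bracketed words, and sends `a₁` to `c̃⁻¹ a₁`. Comparing the results shows
that `b₂ b₁` commutes with `c̃`; as conjugation by `c̃` swaps `b₁` and `b₂`, it follows that
`b₂ b₁ = b₁ b₂`. -/

section GroupLemmas

variable {G : Type*} [Group G]

theorem Commute.commutatorElement_right_s3 {a b c : G} (hb : Commute a b) (hc : Commute a c) :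
    Commute a ⁅b, c⁆ := by
  rw [commutatorElement_def]
  exact ((hb.mul_right hc).mul_right hb.inv_right).mul_right hc.inv_right

theorem MonoidHom.map_eq_conj_mul_of_eq_mul_mul (φ : G →* G) {a a' b u w : G}
    (h : a' = b * a * w) (hb : φ b = b) (hw : φ w = w) (ha : φ a = u * a) :
    φ a' = b * u * b⁻¹ * a' := by
  subst h
  simp only [map_mul, hb, hw, ha]
  group

theorem commute_mul_of_commutatorElement_eq {a a' b b' x y : G} (hb : Commute b y)
    (hb' : Commute b' y) (hw : Commute (a⁻¹ * b⁻¹ * a') y) (hw' : Commute (a'⁻¹ * b'⁻¹ * a) y)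
    (hx : ⁅a, y⁻¹⁆ = x) : Commute (b' * b) x := by
  set φ : G →* G := (MulAut.conj y⁻¹).toMonoidHom
  have hfix {g : G} (hg : Commute g y) : φ g = g := hg.symm.inv_left.mul_inv_cancel
  have ha : φ a = x⁻¹ * a := by
    rw [← hx]
    simp only [φ, MulEquiv.coe_toMonoidHom, MulAut.conj_apply, commutatorElement_def]
    group
  have h₁ := φ.map_eq_conj_mul_of_eq_mul_mul (a' := a') (w := a⁻¹ * b⁻¹ * a')
    (by group) (hfix hb) (hfix hw) ha
  have h₂ := φ.map_eq_conj_mul_of_eq_mul_mul (a' := a') (b := b'⁻¹) (w := (a'⁻¹ * b'⁻¹ * a)⁻¹)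
    (by group) (by rw [map_inv, hfix hb']) (by rw [map_inv, hfix hw']) ha
  have hconj : b * x⁻¹ * b⁻¹ = b'⁻¹ * x⁻¹ * b' := by
    simpa using mul_right_cancel (h₁.symm.trans h₂)
  refine Commute.inv_right_iff.mp ?_
  calc b' * b * x⁻¹ = b' * (b * x⁻¹ * b⁻¹) * b := by group
    _ = x⁻¹ * (b' * b) := by rw [hconj]; group

theorem Commute.of_conj_swap {b b' x : G} (h₁ : b' = x⁻¹ * b * x) (h₂ : b = x⁻¹ * b' * x)
    (h : Commute (b' * b) x) : Commute b b' :=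
  calc b * b' = (x⁻¹ * b' * x) * (x⁻¹ * b * x) := by rw [← h₁, ← h₂]
    _ = x⁻¹ * (b' * b) * x := by group
    _ = b' * b := by rw [mul_assoc, h.eq]; group

end GroupLemmas

section Relations

variable {k n p r : ℕ}

open PresentedGroup

theorem gen_b2_eq :
    gen k n p r .b2 = (gen k n p r .ct)⁻¹ * gen k n p r .b1 * gen k n p r .ct :=
  mk_eq_mk_of_mul_inv_mem (x := Gen.B2 k) (y := (Gen.Ct k)⁻¹ * Gen.B1 k * Gen.Ct k)
    (by simp [rels])

theorem gen_b1_eq :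
    gen k n p r .b1 = (gen k n p r .ct)⁻¹ * gen k n p r .b2 * gen k n p r .ct :=
  mk_eq_mk_of_mul_inv_mem (x := Gen.B1 k) (y := (Gen.Ct k)⁻¹ * Gen.B2 k * Gen.Ct k)
    (by simp [rels])

theorem commute_gen_b1_dt : Commute (gen k n p r .b1) (gen k n p r .dt) :=
  commutatorElement_eq_one_iff_commute.mp <|
    one_of_mem (x := ⁅Gen.B1 k, Gen.Dt k⁆) (by simp [rels])

theorem commute_gen_b2_dt : Commute (gen k n p r .b2) (gen k n p r .dt) :=
  commutatorElement_eq_one_iff_commute.mp <|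
    one_of_mem (x := ⁅Gen.B2 k, Gen.Dt k⁆) (by simp [rels])

theorem commute_gen_a1_b1_a2_dt :
    Commute ((gen k n p r .a1)⁻¹ * (gen k n p r .b1)⁻¹ * gen k n p r .a2) (gen k n p r .dt) :=
  commutatorElement_eq_one_iff_commute.mp <|
    one_of_mem (x := ⁅(Gen.A1 k)⁻¹ * (Gen.B1 k)⁻¹ * Gen.A2 k, Gen.Dt k⁆) (by simp [rels])

theorem commute_gen_a2_b2_a1_dt :
    Commute ((gen k n p r .a2)⁻¹ * (gen k n p r .b2)⁻¹ * gen k n p r .a1) (gen k n p r .dt) :=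
  commutatorElement_eq_one_iff_commute.mp <|
    one_of_mem (x := ⁅(Gen.A2 k)⁻¹ * (Gen.B2 k)⁻¹ * Gen.A1 k, Gen.Dt k⁆) (by simp [rels])

theorem commutatorElement_gen_a1_dt_inv :
    ⁅gen k n p r .a1, (gen k n p r .dt)⁻¹⁆ = gen k n p r .ct :=
  mk_eq_mk_of_mul_inv_mem (x := ⁅Gen.A1 k, (Gen.Dt k)⁻¹⁆) (y := Gen.Ct k) (by simp [rels])

theorem commute_gen_b1_b2_s3 : Commute (gen k n p r .b1) (gen k n p r .b2) :=
  .of_conj_swap gen_b2_eq gen_b1_eq <|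
    commute_mul_of_commutatorElement_eq commute_gen_b1_dt commute_gen_b2_dt
      commute_gen_a1_b1_a2_dt commute_gen_a2_b2_a1_dt commutatorElement_gen_a1_dt_inv

-- The relations involving `c₁` and `d₁` form the twelfth clause of `rels`.
variable {i : Fin k} (hi : (i : ℕ) = 0)
include hi

theorem commute_gen_b1_c : Commute (gen k n p r .b1) (gen k n p r (.c i)) :=
  commutatorElement_eq_one_iff_commute.mp <|
    one_of_mem (x := ⁅Gen.B1 k, Gen.C k i⁆)
      (by (iterate 11 right); exact .inl ⟨i, hi, by simp⟩)

theorem commutatorElement_gen_b2_c_inv_pow :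
    ⁅gen k n p r .b2, (gen k n p r (.c i))⁻¹⁆ ^ n = gen k n p r (.d i) :=
  mk_eq_mk_of_mul_inv_mem (x := ⁅Gen.B2 k, (Gen.C k i)⁻¹⁆ ^ n) (y := Gen.D k i)
    (by (iterate 11 right); exact .inl ⟨i, hi, by simp⟩)

theorem commutatorElement_gen_b1_inv_d_inv :
    ⁅(gen k n p r .b1)⁻¹, (gen k n p r (.d i))⁻¹⁆ = gen k n p r .a1 :=
  mk_eq_mk_of_mul_inv_mem (x := ⁅(Gen.B1 k)⁻¹, (Gen.D k i)⁻¹⁆) (y := Gen.A1 k)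
    (by (iterate 11 right); exact .inl ⟨i, hi, by simp⟩)

end Relations

theorem a1_trivial_general (k n p r : ℕ) (hk : 2 ≤ k) :
    gen k n p r Gen.a1 = 1 := by
  let i : Fin k := ⟨0, by omega⟩
  have hi : (i : ℕ) = 0 := rfl
  have hd : Commute (gen k n p r .b1) (gen k n p r (.d i)) := by
    rw [← commutatorElement_gen_b2_c_inv_pow hi]
    exact (commute_gen_b1_b2_s3.commutatorElement_right_s3 (commute_gen_b1_c hi).inv_right).pow_right n
  rw [← commutatorElement_gen_b1_inv_d_inv hi]
  exact commutatorElement_eq_one_iff_commute.mpr hd.inv_left.inv_right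

/-- key step of the proof of Lemma 3.3: the image of `a₁`
is trivial in `G(k,n,p,r)`. -/
theorem a1_trivial (k n p r : ℕ) (hk : 2 ≤ k) (hn : 1 ≤ n) :
    gen k n p r Gen.a1 = 1 :=
  a1_trivial_general k n p r hk
end
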